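/- Let X be a finite alphabet and P₀, P₁ two distinct probability distributions on X with full support. For ρ ∈ [0,1] define the tilted distribution P_ρ(x) = P₀(x)^{1-ρ} P₁(x)^ρ / Σ_{x'} P₀(x')^{1-ρ} P₁(x')^ρ. Then for any e₀ ∈ (0, D(P₁‖P₀)], inf{ D(Q‖P₁) : Q ∈ P(X), D(Q‖P₀) < e₀ } = inf{ D(Q‖P₁) : Q ∈ P(X), D(Q‖P₀) ≤ e₀ }, and this infimum is attained by Q = P_ρ for some ρ ∈ [0,1]. -/

import Mathlib

open scoped BigOperators

/-- KL divergence (base-2 logarithms) between finitely supported distributions. -/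
noncomputable def KL {X : Type*} [Fintype X] (P Q : X → ℝ) : ℝ :=
  ∑ x, P x * Real.logb 2 (P x / Q x)

/-- `P` is a probability distribution on the finite alphabet `X`. -/
def IsProb {X : Type*} [Fintype X] (P : X → ℝ) : Prop :=
  (∀ x, 0 ≤ P x) ∧ ∑ x, P x = 1

/-! The tilted family `ρ ↦ P_ρ` runs continuously from `P₀` to `P₁`, so some `ρ ∈ (0,1]` has
`D(P_ρ‖P₀) = e₀`. Since `log P_ρ` is affine in `(log P₀, log P₁)`, every `Q` satisfies
`D(Q‖P_ρ) = (1-ρ) D(Q‖P₀) + ρ D(Q‖P₁) + log Z_ρ`; comparing this with `D(P_ρ‖P_ρ) = 0` and using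
`D(Q‖P_ρ) ≥ 0` shows that `P_ρ` minimizes `D(·‖P₁)` on `{D(·‖P₀) ≤ e₀}`. The strict constraint
has the same infimum: mixing `P_ρ` with a little of `P₀` pushes `D(·‖P₀)` strictly below `e₀` by
convexity, while `D(·‖P₁)` moves continuously. -/

open Real Set Filter Topology

section

variable {X : Type*}

lemma tilt_numerator_pos {P₀ P₁ : X → ℝ} (h₀ : ∀ x, 0 < P₀ x) (h₁ : ∀ x, 0 < P₁ x) (ρ : ℝ)
    (x : X) : 0 < P₀ x ^ (1 - ρ) * P₁ x ^ ρ := by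
  have := h₀ x; have := h₁ x; positivity

variable [Fintype X]

lemma IsProb.mix {A B : X → ℝ} (hA : IsProb A) (hB : IsProb B) {t : ℝ} (ht₀ : 0 ≤ t)
    (ht₁ : t ≤ 1) : IsProb fun x => (1 - t) * A x + t * B x := by
  refine ⟨fun x => ?_, ?_⟩
  · have := hA.1 x; have := hB.1 x; have : 0 ≤ 1 - t := sub_nonneg.2 ht₁; positivity
  · rw [Finset.sum_add_distrib, ← Finset.mul_sum, ← Finset.mul_sum, hA.2, hB.2]; ring

lemma IsProb.nonempty {P : X → ℝ} (hP : IsProb P) : Nonempty X := by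
  by_contra h
  rw [not_nonempty_iff] at h
  simpa using hP.2

lemma mul_logb_div_eq (q : ℝ) {p : ℝ} (hp : p ≠ 0) :
    q * logb 2 (q / p) = (q * log q - q * log p) / log 2 := by
  rcases eq_or_ne q 0 with rfl | hq
  · simp
  · rw [logb, log_div hq hp]; ring

lemma sub_le_mul_log_div {q p : ℝ} (hq : 0 ≤ q) (hp : 0 < p) : q - p ≤ q * log (q / p) := by
  have h := self_sub_one_le_mul_log (div_nonneg hq hp.le)
  calc q - p = p * (q / p - 1) := by field_simp
    _ ≤ p * (q / p * log (q / p)) := by gcongr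
    _ = q * log (q / p) := by field_simp

lemma KL_nonneg {Q P : X → ℝ} (hQ : IsProb Q) (hP : ∑ x, P x = 1) (hPpos : ∀ x, 0 < P x) :
    0 ≤ KL Q P := by
  have hlog : 0 ≤ ∑ x, Q x * log (Q x / P x) := by
    calc (0 : ℝ) = ∑ x, (Q x - P x) := by rw [Finset.sum_sub_distrib, hQ.2, hP, sub_self]
      _ ≤ _ := Finset.sum_le_sum fun x _ => sub_le_mul_log_div (hQ.1 x) (hPpos x)
  simp only [KL, logb, ← mul_div_assoc, ← Finset.sum_div]
  positivity

lemma KL_self {P : X → ℝ} (hP : ∀ x, P x ≠ 0) : KL P P = 0 := by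
  simp [KL, div_self (hP _)]

lemma continuous_KL_left {P : X → ℝ} (hP : ∀ x, P x ≠ 0) :
    Continuous fun Q : X → ℝ => KL Q P := by
  simp only [KL, mul_logb_div_eq _ (hP _)]
  fun_prop

lemma KL_mix_le {A B P : X → ℝ} (hA : ∀ x, 0 ≤ A x) (hB : ∀ x, 0 ≤ B x)
    (hP : ∀ x, P x ≠ 0) {t : ℝ} (ht₀ : 0 ≤ t) (ht₁ : t ≤ 1) :
    KL (fun x => (1 - t) * A x + t * B x) P ≤ (1 - t) * KL A P + t * KL B P := by
  simp only [KL, Finset.mul_sum, ← Finset.sum_add_distrib, mul_logb_div_eq _ (hP _)]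
  refine Finset.sum_le_sum fun x _ => ?_
  have hconv := convexOn_mul_log.2 (mem_Ici.2 (hA x)) (mem_Ici.2 (hB x))
    (sub_nonneg.2 ht₁) ht₀ (by ring)
  simp only [smul_eq_mul] at hconv
  rw [mul_div_assoc', mul_div_assoc', ← add_div]
  gcongr
  linarith

noncomputable def tilt (P₀ P₁ : X → ℝ) (ρ : ℝ) (x : X) : ℝ :=
  P₀ x ^ (1 - ρ) * P₁ x ^ ρ / ∑ x', P₀ x' ^ (1 - ρ) * P₁ x' ^ ρ

variable {P₀ P₁ : X → ℝ}

lemma tilt_normalizer_pos [Nonempty X] (h₀ : ∀ x, 0 < P₀ x) (h₁ : ∀ x, 0 < P₁ x)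
    (ρ : ℝ) : 0 < ∑ x, P₀ x ^ (1 - ρ) * P₁ x ^ ρ :=
  Finset.sum_pos (fun x _ => tilt_numerator_pos h₀ h₁ ρ x) Finset.univ_nonempty

lemma tilt_pos [Nonempty X] (h₀ : ∀ x, 0 < P₀ x) (h₁ : ∀ x, 0 < P₁ x) (ρ : ℝ)
    (x : X) : 0 < tilt P₀ P₁ ρ x :=
  div_pos (tilt_numerator_pos h₀ h₁ ρ x) (tilt_normalizer_pos h₀ h₁ ρ)

lemma isProb_tilt [Nonempty X] (h₀ : ∀ x, 0 < P₀ x) (h₁ : ∀ x, 0 < P₁ x)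
    (ρ : ℝ) : IsProb (tilt P₀ P₁ ρ) :=
  ⟨fun x => (tilt_pos h₀ h₁ ρ x).le,
    by simp only [tilt]; rw [← Finset.sum_div, div_self (tilt_normalizer_pos h₀ h₁ ρ).ne']⟩

lemma continuous_tilt [Nonempty X] (h₀ : ∀ x, 0 < P₀ x) (h₁ : ∀ x, 0 < P₁ x) :
    Continuous (tilt P₀ P₁) := by
  have hnum : ∀ x, Continuous fun ρ : ℝ => P₀ x ^ (1 - ρ) * P₁ x ^ ρ := fun x =>
    (continuous_const.rpow (continuous_const.sub continuous_id) fun _ => Or.inl (h₀ x).ne').mul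
      (continuous_const.rpow continuous_id fun _ => Or.inl (h₁ x).ne')
  exact continuous_pi fun x => (hnum x).div (continuous_finsetSum _ fun y _ => hnum y)
    fun ρ => (tilt_normalizer_pos h₀ h₁ ρ).ne'

lemma KL_tilt_right [Nonempty X] (h₀ : ∀ x, 0 < P₀ x) (h₁ : ∀ x, 0 < P₁ x)
    {Q : X → ℝ} (hQ : ∑ x, Q x = 1) (ρ : ℝ) :
    KL Q (tilt P₀ P₁ ρ) = (1 - ρ) * KL Q P₀ + ρ * KL Q P₁
      + logb 2 (∑ x, P₀ x ^ (1 - ρ) * P₁ x ^ ρ) := by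
  have hpoint : ∀ x, Q x * logb 2 (Q x / tilt P₀ P₁ ρ x)
      = (1 - ρ) * (Q x * logb 2 (Q x / P₀ x)) + ρ * (Q x * logb 2 (Q x / P₁ x))
        + Q x * logb 2 (∑ x, P₀ x ^ (1 - ρ) * P₁ x ^ ρ) := by
    intro x
    rw [mul_logb_div_eq _ (tilt_pos h₀ h₁ ρ x).ne', mul_logb_div_eq _ (h₀ x).ne',
      mul_logb_div_eq _ (h₁ x).ne', tilt,
      log_div (tilt_numerator_pos h₀ h₁ ρ x).ne' (tilt_normalizer_pos h₀ h₁ ρ).ne',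
      log_mul (rpow_pos_of_pos (h₀ x) _).ne' (rpow_pos_of_pos (h₁ x) _).ne',
      log_rpow (h₀ x), log_rpow (h₁ x), logb]
    ring
  simp only [KL, hpoint, Finset.sum_add_distrib, ← Finset.mul_sum, ← Finset.sum_mul, hQ, one_mul]

lemma tilt_zero (hP₀ : ∑ x, P₀ x = 1) : tilt P₀ P₁ 0 = P₀ := by
  funext x
  simp [tilt, hP₀]

lemma tilt_one (hP₁ : ∑ x, P₁ x = 1) : tilt P₀ P₁ 1 = P₁ := by
  funext x
  simp [tilt, hP₁]

lemma KL_tilt_le_of_KL_le [Nonempty X] (h₀ : ∀ x, 0 < P₀ x) (h₁ : ∀ x, 0 < P₁ x) {ρ : ℝ}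
    (hρ : ρ ∈ Ioc (0 : ℝ) 1) {Q : X → ℝ} (hQ : IsProb Q)
    (hQP₀ : KL Q P₀ ≤ KL (tilt P₀ P₁ ρ) P₀) : KL (tilt P₀ P₁ ρ) P₁ ≤ KL Q P₁ := by
  have hT := isProb_tilt h₀ h₁ ρ
  have hQT : 0 ≤ KL Q (tilt P₀ P₁ ρ) := KL_nonneg hQ hT.2 (tilt_pos h₀ h₁ ρ)
  have hTT : KL (tilt P₀ P₁ ρ) (tilt P₀ P₁ ρ) = 0 := KL_self fun x => (tilt_pos h₀ h₁ ρ x).ne'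
  rw [KL_tilt_right h₀ h₁ hQ.2] at hQT
  rw [KL_tilt_right h₀ h₁ hT.2] at hTT
  have : (1 - ρ) * KL Q P₀ ≤ (1 - ρ) * KL (tilt P₀ P₁ ρ) P₀ :=
    mul_le_mul_of_nonneg_left hQP₀ (sub_nonneg.2 hρ.2)
  exact le_of_mul_le_mul_left (by linarith) hρ.1

lemma exists_tilt_KL_eq (hP₀ : IsProb P₀) (hP₁ : ∑ x, P₁ x = 1) (h₀ : ∀ x, 0 < P₀ x)
    (h₁ : ∀ x, 0 < P₁ x) {e : ℝ} (he : e ∈ Ioc 0 (KL P₁ P₀)) :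
    ∃ ρ ∈ Ioc (0 : ℝ) 1, KL (tilt P₀ P₁ ρ) P₀ = e := by
  have := hP₀.nonempty
  have hcont : Continuous fun ρ => KL (tilt P₀ P₁ ρ) P₀ :=
    (continuous_KL_left fun x => (h₀ x).ne').comp (continuous_tilt h₀ h₁)
  have hKL₀ : KL (tilt P₀ P₁ 0) P₀ = 0 := by
    rw [tilt_zero hP₀.2, KL_self fun x => (h₀ x).ne']
  obtain ⟨ρ, hρ, hρe⟩ := intermediate_value_Icc zero_le_one hcont.continuousOn
    (show e ∈ Icc _ _ by rw [hKL₀, tilt_one hP₁]; exact Ioc_subset_Icc_self he)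
  refine ⟨ρ, ⟨hρ.1.lt_of_ne ?_, hρ.2⟩, hρe⟩
  rintro rfl
  exact he.1.ne' (hρe ▸ hKL₀)

lemma isLeast_KL_tilt [Nonempty X] (h₀ : ∀ x, 0 < P₀ x) (h₁ : ∀ x, 0 < P₁ x) {ρ : ℝ}
    (hρ : ρ ∈ Ioc (0 : ℝ) 1) :
    IsLeast {v | ∃ Q : X → ℝ, IsProb Q ∧ KL Q P₀ ≤ KL (tilt P₀ P₁ ρ) P₀ ∧ v = KL Q P₁}
      (KL (tilt P₀ P₁ ρ) P₁) :=
  ⟨⟨_, isProb_tilt h₀ h₁ ρ, le_rfl, rfl⟩,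
    fun _ ⟨_, hQ, hQP₀, hv⟩ => hv ▸ KL_tilt_le_of_KL_le h₀ h₁ hρ hQ hQP₀⟩

lemma KL_mem_closure_KL_lt {Q P : X → ℝ} (hQ : IsProb Q) (hP₀ : IsProb P₀)
    (h₀ : ∀ x, P₀ x ≠ 0) (hP : ∀ x, P x ≠ 0) (hQP₀ : 0 < KL Q P₀) :
    KL Q P ∈ closure {v | ∃ Q' : X → ℝ, IsProb Q' ∧ KL Q' P₀ < KL Q P₀ ∧ v = KL Q' P} := by
  set mix : ℝ → X → ℝ := fun t x => (1 - t) * Q x + t * P₀ x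
  have hlim : Tendsto (fun t => KL (mix t) P) (𝓝[>] 0) (𝓝 (KL Q P)) := by
    have hcont : Continuous fun t => KL (mix t) P := (continuous_KL_left hP).comp (by fun_prop)
    simpa [mix] using hcont.continuousWithinAt.tendsto (x := 0) (s := Ioi 0)
  refine mem_closure_of_tendsto hlim ?_
  filter_upwards [Ioc_mem_nhdsGT zero_lt_one] with t ht
  refine ⟨mix t, hQ.mix hP₀ ht.1.le ht.2, ?_, rfl⟩
  have := KL_mix_le hQ.1 hP₀.1 h₀ ht.1.le ht.2
  rw [KL_self h₀] at this
  nlinarith [ht.1]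

lemma isGLB_KL_tilt (hP₀ : IsProb P₀) (h₀ : ∀ x, 0 < P₀ x) (h₁ : ∀ x, 0 < P₁ x) {ρ : ℝ}
    (hρ : ρ ∈ Ioc (0 : ℝ) 1) (hpos : 0 < KL (tilt P₀ P₁ ρ) P₀) :
    IsGLB {v | ∃ Q : X → ℝ, IsProb Q ∧ KL Q P₀ < KL (tilt P₀ P₁ ρ) P₀ ∧ v = KL Q P₁}
      (KL (tilt P₀ P₁ ρ) P₁) := by
  have := hP₀.nonempty
  refine isGLB_of_mem_closure (fun _ ⟨_, hQ, hQP₀, hv⟩ => ?_) <|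
    KL_mem_closure_KL_lt (isProb_tilt h₀ h₁ ρ) hP₀ (fun x => (h₀ x).ne') (fun x => (h₁ x).ne') hpos
  exact hv ▸ KL_tilt_le_of_KL_le h₀ h₁ hρ hQ hQP₀.le

end

theorem stmt8_general {X : Type*} [Fintype X] (P₀ P₁ : X → ℝ)
    (hP₀ : IsProb P₀) (hP₁ : IsProb P₁)
    (h₀ : ∀ x, 0 < P₀ x) (h₁ : ∀ x, 0 < P₁ x)
    (e₀ : ℝ) (he₀ : e₀ ∈ Set.Ioc 0 (KL P₁ P₀)) :
    sInf {v | ∃ Q : X → ℝ, IsProb Q ∧ KL Q P₀ < e₀ ∧ v = KL Q P₁}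
      = sInf {v | ∃ Q : X → ℝ, IsProb Q ∧ KL Q P₀ ≤ e₀ ∧ v = KL Q P₁} ∧
    ∃ ρ ∈ Set.Icc (0:ℝ) 1,
      KL (fun x => P₀ x ^ (1-ρ) * P₁ x ^ ρ /
            ∑ x', P₀ x' ^ (1-ρ) * P₁ x' ^ ρ) P₀ ≤ e₀ ∧
      KL (fun x => P₀ x ^ (1-ρ) * P₁ x ^ ρ /
            ∑ x', P₀ x' ^ (1-ρ) * P₁ x' ^ ρ) P₁
        = sInf {v | ∃ Q : X → ℝ, IsProb Q ∧ KL Q P₀ ≤ e₀ ∧ v = KL Q P₁} := by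
  have := hP₀.nonempty
  obtain ⟨ρ, hρ, rfl⟩ := exists_tilt_KL_eq hP₀ hP₁.2 h₀ h₁ he₀
  have hleast := isLeast_KL_tilt h₀ h₁ hρ
  have hglb := isGLB_KL_tilt hP₀ h₀ h₁ hρ he₀.1
  have hmem : KL P₀ P₁ ∈ {v | ∃ Q : X → ℝ, IsProb Q ∧ KL Q P₀ < KL (tilt P₀ P₁ ρ) P₀ ∧
      v = KL Q P₁} := ⟨P₀, hP₀, by rw [KL_self fun x => (h₀ x).ne']; exact he₀.1, rfl⟩
  rw [hglb.csInf_eq ⟨_, hmem⟩, hleast.csInf_eq]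
  exact ⟨rfl, ρ, Ioc_subset_Icc_self hρ, le_rfl, rfl⟩

/-- Binary hypothesis testing trade-off: for `e₀ ∈ (0, D(P₁‖P₀)]`, the strict
and non-strict constrained infima coincide, and the infimum is attained by a
tilted distribution `P_ρ` for some `ρ ∈ [0,1]`. -/
theorem stmt8 {X : Type*} [Fintype X] (P₀ P₁ : X → ℝ)
    (hP₀ : IsProb P₀) (hP₁ : IsProb P₁)
    (h₀ : ∀ x, 0 < P₀ x) (h₁ : ∀ x, 0 < P₁ x) (hne : P₀ ≠ P₁)
    (e₀ : ℝ) (he₀ : e₀ ∈ Set.Ioc 0 (KL P₁ P₀)) :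
    sInf {v | ∃ Q : X → ℝ, IsProb Q ∧ KL Q P₀ < e₀ ∧ v = KL Q P₁}
      = sInf {v | ∃ Q : X → ℝ, IsProb Q ∧ KL Q P₀ ≤ e₀ ∧ v = KL Q P₁} ∧
    ∃ ρ ∈ Set.Icc (0:ℝ) 1,
      KL (fun x => P₀ x ^ (1-ρ) * P₁ x ^ ρ /
            ∑ x', P₀ x' ^ (1-ρ) * P₁ x' ^ ρ) P₀ ≤ e₀ ∧
      KL (fun x => P₀ x ^ (1-ρ) * P₁ x ^ ρ /
            ∑ x', P₀ x' ^ (1-ρ) * P₁ x' ^ ρ) P₁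
        = sInf {v | ∃ Q : X → ℝ, IsProb Q ∧ KL Q P₀ ≤ e₀ ∧ v = KL Q P₁} :=
  stmt8_general P₀ P₁ hP₀ hP₁ h₀ h₁ e₀ he₀
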